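/- With α(s) = (s/3) π^{2−s/2} Γ(s/2) ζ(s−2), for s in the critical strip 0 < Re(s) < 1 the equality |α(1−s)| = |α(s)| is equivalent to |ζ(s+2)/ζ(s−2)| = 4π² / |s² − 1|. -/

import Mathlib

/-!
Since `π ^ (-s / 2) * Γ(s / 2) = Γℝ(s)`, we have `α(s) = (s / 3) π² Γℝ(s) ζ(s - 2)`. The functional
equation `Γℝ(-1 - s) ζ(-1 - s) = Γℝ(s + 2) ζ(s + 2)` and the recurrence `Γℝ(z + 2) = Γℝ(z) z / (2π)`
turn `α(1 - s)` into `(s² - 1) s / 12 · Γℝ(s) ζ(s + 2)`, so that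
`α(1 - s) · 4π² ζ(s - 2) = (s² - 1) ζ(s + 2) α(s)`. In the critical strip `α(s)`, `s² - 1` and
`ζ(s - 2)` are nonzero (the last because `Γℝ(s - 2) ζ(s - 2) = Γℝ(3 - s) ζ(3 - s)` and
`Re (3 - s) > 1`), so taking absolute values gives the equivalence.
-/

open Complex

/-- The function α appearing in the asymptotics of finite torus zeta functions. -/
noncomputable def alphaFn (s : ℂ) : ℂ :=
  (s / 3) * (Real.pi : ℂ) ^ (2 - s / 2) * Complex.Gamma (s / 2) * riemannZeta (s - 2)

lemma riemannZeta_mul_Gammaℝ {s : ℂ} (hs : s ≠ 0) (hΓ : Gammaℝ s ≠ 0) :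
    riemannZeta s * Gammaℝ s = completedRiemannZeta s := by
  rw [riemannZeta_def_of_ne_zero hs, div_mul_cancel₀ _ hΓ]

lemma riemannZeta_one_sub_mul_Gammaℝ {s : ℂ} (hs₀ : s ≠ 0) (hs₁ : s ≠ 1) (hΓ : Gammaℝ s ≠ 0)
    (hΓ' : Gammaℝ (1 - s) ≠ 0) :
    riemannZeta (1 - s) * Gammaℝ (1 - s) = riemannZeta s * Gammaℝ s := by
  rw [riemannZeta_mul_Gammaℝ (sub_ne_zero.2 hs₁.symm) hΓ', riemannZeta_mul_Gammaℝ hs₀ hΓ,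
    completedRiemannZeta_one_sub]

lemma Gammaℝ_ne_zero_of_neg_two_lt_re {s : ℂ} (hs : s ≠ 0) (hre : -2 < s.re) :
    Gammaℝ s ≠ 0 := by
  rw [Ne, Gammaℝ_eq_zero_iff]
  rintro ⟨_ | n, rfl⟩
  · simp at hs
  · simp at hre
    linarith

lemma riemannZeta_ne_zero_of_re_nonpos {s : ℂ} (hre : s.re ≤ 0) (hΓ : Gammaℝ s ≠ 0) :
    riemannZeta s ≠ 0 := by
  have hs₀ : s ≠ 0 := by
    rintro rfl
    simp [Gammaℝ_def] at hΓ
  have hs₁ : s ≠ 1 := by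
    rintro rfl
    norm_num at hre
  have hre' : 1 ≤ (1 - s).re := by simp; linarith
  have hΓ' := Gammaℝ_ne_zero_of_re_pos (s := 1 - s) (by linarith)
  intro hζ
  have hfe := riemannZeta_one_sub_mul_Gammaℝ hs₀ hs₁ hΓ hΓ'
  rw [hζ, zero_mul] at hfe
  exact mul_ne_zero (riemannZeta_ne_zero_of_one_le_re hre') hΓ' hfe

lemma alphaFn_eq (s : ℂ) :
    alphaFn s = s / 3 * (Real.pi : ℂ) ^ 2 * Gammaℝ s * riemannZeta (s - 2) := by
  have hπ : (Real.pi : ℂ) ≠ 0 := ofReal_ne_zero.2 Real.pi_ne_zero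
  rw [alphaFn, Gammaℝ_def, sub_eq_add_neg, cpow_add _ _ hπ, neg_div, cpow_ofNat]
  ring

lemma alphaFn_one_sub {s : ℂ} (hre : 0 < s.re) (hodd : ∀ n : ℕ, s ≠ 2 * n + 1) :
    alphaFn (1 - s) = (s ^ 2 - 1) * s / 12 * Gammaℝ s * riemannZeta (s + 2) := by
  have hs₀ : s ≠ 0 := by rintro rfl; simp at hre
  have hs₂ : s + 2 ≠ 0 := fun h => by have := congrArg re h; simp at this; linarith
  have hs₃ : -1 - s ≠ 0 := fun h => by have := congrArg re h; simp at this; linarith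
  have hΓ : Gammaℝ (-1 - s) ≠ 0 := by
    rw [Ne, Gammaℝ_eq_zero_iff]
    rintro ⟨_ | n, hn⟩
    · exact hs₃ (by simpa using hn)
    · exact hodd n (by push_cast at hn; linear_combination -hn)
  have hfe := riemannZeta_one_sub_mul_Gammaℝ hs₂
    (fun h => by have := congrArg re h; simp at this; linarith)
    (Gammaℝ_ne_zero_of_re_pos (by simp; linarith)) (by rwa [show 1 - (s + 2) = -1 - s by ring])
  rw [show 1 - (s + 2) = -1 - s by ring, ← eq_div_iff hΓ, Gammaℝ_add_two hs₀] at hfe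
  rw [alphaFn_eq, show 1 - s - 2 = -1 - s by ring, show 1 - s = -1 - s + 2 by ring,
    Gammaℝ_add_two hs₃, hfe]
  field_simp
  ring

lemma alphaFn_one_sub_mul {s : ℂ} (hre : 0 < s.re) (hodd : ∀ n : ℕ, s ≠ 2 * n + 1) :
    alphaFn (1 - s) * (4 * Real.pi ^ 2 * riemannZeta (s - 2)) =
      (s ^ 2 - 1) * riemannZeta (s + 2) * alphaFn s := by
  rw [alphaFn_one_sub hre hodd, alphaFn_eq]
  ring

lemma eq_iff_div_eq_div_of_mul_eq_mul {K : Type*} [Field K] {a b c p q r : K} (hb : b ≠ 0)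
    (hc : c ≠ 0) (hp : p ≠ 0) (hr : r ≠ 0) (h : a * (c * r) = p * q * b) :
    a = b ↔ q / r = c / p := by
  rw [div_eq_div_iff hr hp]
  constructor
  · rintro rfl
    exact mul_left_cancel₀ hb (by linear_combination -h)
  · intro h'
    exact mul_right_cancel₀ (mul_ne_zero hc hr) (by linear_combination h + b * h')

theorem abs_alpha_eq_iff (s : ℂ) (h0 : 0 < s.re) (h1 : s.re < 1) :
    ‖alphaFn (1 - s)‖ = ‖alphaFn s‖ ↔
      ‖riemannZeta (s + 2) / riemannZeta (s - 2)‖ =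
        4 * Real.pi ^ 2 / ‖s ^ 2 - 1‖ := by
  have hodd (n : ℕ) : s ≠ 2 * n + 1 := fun h => by
    have := congrArg re h
    simp at this
    linarith [n.cast_nonneg (α := ℝ)]
  have hζ : riemannZeta (s - 2) ≠ 0 :=
    riemannZeta_ne_zero_of_re_nonpos (by simp; linarith)
      (Gammaℝ_ne_zero_of_neg_two_lt_re
        (fun h => by have := congrArg re h; simp at this; linarith) (by simp; linarith))
  have hα : alphaFn s ≠ 0 := by
    rw [alphaFn_eq]
    have : s ≠ 0 := by rintro rfl; simp at h0
    simp [this, hζ, Gammaℝ_ne_zero_of_re_pos h0]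
  have hs : s ^ 2 - 1 ≠ 0 := by
    rw [show s ^ 2 - 1 = (s - 1) * (s + 1) by ring]
    refine mul_ne_zero (fun h => ?_) (fun h => ?_) <;>
      · have := congrArg re h
        simp at this
        linarith
  have key := congrArg norm (alphaFn_one_sub_mul h0 hodd)
  simp only [norm_mul, norm_pow, norm_real, Real.norm_eq_abs, abs_of_pos Real.pi_pos] at key
  rw [norm_div]
  exact eq_iff_div_eq_div_of_mul_eq_mul (norm_ne_zero_iff.2 hα) (by positivity)
    (norm_ne_zero_iff.2 hs) (norm_ne_zero_iff.2 hζ) (by simpa using key)
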